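/- If G is a Gröbner basis of an ideal I ⊆ K[x₁,…,xₙ] with respect to a graded ordering ≺, then the set of normal (standard) monomials modulo ⟨I*⟩ in K[x₁,…,xₙ,t] with respect to ≺_t is exactly { t^r · w : w a normal monomial mod I, r ∈ ℕ }; consequently, the classes of these monomials form a K-basis of K[x₁,…,xₙ,t]/⟨I*⟩. -/

import Mathlib

open MvPolynomial

noncomputable def deh {K : Type*} [CommSemiring K] {n : ℕ}
    (F : MvPolynomial (Option (Fin n)) K) : MvPolynomial (Fin n) K :=
  aeval (fun o => o.elim 1 X) F

noncomputable def hmz {K : Type*} [CommSemiring K] {n : ℕ}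
    (f : MvPolynomial (Fin n) K) : MvPolynomial (Option (Fin n)) K :=
  f.support.sum fun d =>
    monomial (Finsupp.mapDomain some d +
      Finsupp.single (none : Option (Fin n)) (f.totalDegree - d.sum fun _ e => e)) (coeff d f)

def mdeg {σ : Type*} (d : σ →₀ ℕ) : ℕ := d.sum fun _ e => e

def IsLM {K σ : Type*} [CommSemiring K] (lt : (σ →₀ ℕ) → (σ →₀ ℕ) → Prop)
    (f : MvPolynomial σ K) (m : σ →₀ ℕ) : Prop :=
  m ∈ f.support ∧ ∀ m' ∈ f.support, m' ≠ m → lt m' m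

def GoodOrder {σ : Type*} (lt : (σ →₀ ℕ) → (σ →₀ ℕ) → Prop) : Prop :=
  (∀ a b, a ≠ b → lt a b ∨ lt b a) ∧ (∀ a b, lt a b → ¬ lt b a) ∧
    (∀ a b c, lt a b → lt b c → lt a c) ∧
    (∀ a b, mdeg a < mdeg b → lt a b) ∧
    (∀ a b c, lt a b → lt (a + c) (b + c))

noncomputable def xpart {n : ℕ} (M : Option (Fin n) →₀ ℕ) : Fin n →₀ ℕ :=
  Finsupp.equivFunOnFinite.symm fun i => M (some i)

def ltT {n : ℕ} (lt : (Fin n →₀ ℕ) → (Fin n →₀ ℕ) → Prop)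
    (M₁ M₂ : Option (Fin n) →₀ ℕ) : Prop :=
  lt (xpart M₁) (xpart M₂) ∨ (xpart M₁ = xpart M₂ ∧ M₁ none < M₂ none)

def monDvd {σ : Type*} (a b : σ →₀ ℕ) : Prop := ∃ c, b = a + c

def IsGB {K σ : Type*} [CommSemiring K] (lt : (σ →₀ ℕ) → (σ →₀ ℕ) → Prop)
    (G Jset : Set (MvPolynomial σ K)) : Prop :=
  G ⊆ Jset ∧ ∀ f ∈ Jset, f ≠ 0 →
    ∃ g ∈ G, ∃ mf mg, IsLM lt f mf ∧ IsLM lt g mg ∧ monDvd mg mf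

noncomputable def HSet {K : Type*} [CommSemiring K] {n : ℕ}
    (I : Ideal (MvPolynomial (Fin n) K)) : Set (MvPolynomial (Option (Fin n)) K) :=
  {F | ∃ f ∈ I, f ≠ 0 ∧ F = hmz f}

def GradedIdeal {K : Type*} [CommSemiring K] {n : ℕ}
    (J : Ideal (MvPolynomial (Option (Fin n)) K)) : Prop :=
  ∀ F ∈ J, ∀ p : ℕ, homogeneousComponent p F ∈ J

noncomputable def dehHom {K : Type*} [CommSemiring K] {n : ℕ} :
    MvPolynomial (Option (Fin n)) K →+* MvPolynomial (Fin n) K :=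
  (aeval (R := K) (fun o : Option (Fin n) => o.elim 1 X)).toRingHom

def NormalMon {K σ : Type*} [CommSemiring K] (lt : (σ →₀ ℕ) → (σ →₀ ℕ) → Prop)
    (Jset : Set (MvPolynomial σ K)) : Set (σ →₀ ℕ) :=
  {w | ∀ f ∈ Jset, f ≠ 0 → ∀ m, IsLM lt f m → ¬ monDvd m w}

def MinGB {K σ : Type*} [CommSemiring K] (lt : (σ →₀ ℕ) → (σ →₀ ℕ) → Prop)
    (G Jset : Set (MvPolynomial σ K)) : Prop :=
  IsGB lt G Jset ∧ ∀ g ∈ G, ∀ g' ∈ G, g ≠ g' →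
    ∀ mg mg', IsLM lt g mg → IsLM lt g' mg' → ¬ monDvd mg mg'

set_option maxHeartbeats 1000000
set_option synthInstance.maxHeartbeats 400000
section Basic

variable {n : ℕ}

lemma mdeg_add {σ : Type*} (a b : σ →₀ ℕ) : mdeg (a + b) = mdeg a + mdeg b := by
  unfold mdeg
  exact Finsupp.sum_add_index' (fun _ => rfl) (fun _ _ _ => rfl)

lemma xpart_apply (M : Option (Fin n) →₀ ℕ) (i : Fin n) : xpart M i = M (some i) := rfl

lemma xpart_add (a b : Option (Fin n) →₀ ℕ) : xpart (a + b) = xpart a + xpart b := by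
  ext i; simp [xpart_apply]

lemma xpart_decomp (d : Fin n →₀ ℕ) (k : ℕ) :
    xpart (Finsupp.mapDomain some d + Finsupp.single none k) = d := by
  ext i
  rw [xpart_apply, Finsupp.add_apply, Finsupp.mapDomain_apply (Option.some_injective _),
    Finsupp.single_eq_of_ne (by simp), add_zero]

lemma decompM (M : Option (Fin n) →₀ ℕ) :
    M = Finsupp.mapDomain some (xpart M) + Finsupp.single none (M none) := by
  ext o
  cases o with
  | none =>
      rw [Finsupp.add_apply, Finsupp.mapDomain_notin_range _ _ (by simp),
        Finsupp.single_eq_same, zero_add]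
  | some i =>
      rw [Finsupp.add_apply, Finsupp.mapDomain_apply (Option.some_injective _),
        Finsupp.single_eq_of_ne (by simp), add_zero, xpart_apply]

lemma mdeg_mapDomain (d : Fin n →₀ ℕ) : mdeg (Finsupp.mapDomain some d) = mdeg d := by
  unfold mdeg
  exact Finsupp.sum_mapDomain_index_inj (h := fun _ => id) (Option.some_injective _)

lemma mdeg_single {σ : Type*} (s : σ) (k : ℕ) : mdeg (Finsupp.single s k) = k := by
  unfold mdeg
  exact Finsupp.sum_single_index rfl

lemma mdeg_M (M : Option (Fin n) →₀ ℕ) : mdeg M = mdeg (xpart M) + M none := by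
  conv_lhs => rw [decompM M]
  rw [mdeg_add, mdeg_mapDomain, mdeg_single]

end Basic

lemma degree_eq_mdeg {σ : Type*} (d : σ →₀ ℕ) : Finsupp.degree d = mdeg d := rfl
section Order

variable {n : ℕ} {lt : (Fin n →₀ ℕ) → (Fin n →₀ ℕ) → Prop}

lemma ltT_trans (hlt : GoodOrder lt) :
    ∀ a b c : Option (Fin n) →₀ ℕ, ltT lt a b → ltT lt b c → ltT lt a c := by
  rintro a b c (h1 | ⟨e1, h1⟩) (h2 | ⟨e2, h2⟩)
  · exact Or.inl (hlt.2.2.1 _ _ _ h1 h2)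
  · exact Or.inl (e2 ▸ h1)
  · exact Or.inl (e1 ▸ h2)
  · exact Or.inr ⟨e1.trans e2, h1.trans h2⟩

lemma ltT_asym (hlt : GoodOrder lt) :
    ∀ a b : Option (Fin n) →₀ ℕ, ltT lt a b → ¬ ltT lt b a := by
  rintro a b (h1 | ⟨e1, h1⟩) (h2 | ⟨e2, h2⟩)
  · exact hlt.2.1 _ _ h1 h2
  · exact hlt.2.1 _ _ h1 (e2 ▸ h1)
  · exact hlt.2.1 _ _ h2 (e1 ▸ h2)
  · exact absurd (h2.trans h1) (lt_irrefl _)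

lemma ltT_total (hlt : GoodOrder lt) :
    ∀ a b : Option (Fin n) →₀ ℕ, a ≠ b → ltT lt a b ∨ ltT lt b a := by
  intro a b hab
  by_cases hx : xpart a = xpart b
  · have hnone : a none ≠ b none := by
      intro h
      apply hab
      rw [decompM a, decompM b, hx, h]
    rcases lt_or_gt_of_ne hnone with h | h
    · exact Or.inl (Or.inr ⟨hx, h⟩)
    · exact Or.inr (Or.inr ⟨hx.symm, h⟩)
  · rcases hlt.1 _ _ hx with h | h
    · exact Or.inl (Or.inl h)
    · exact Or.inr (Or.inl h)

lemma ltT_add (hlt : GoodOrder lt) :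
    ∀ a b c : Option (Fin n) →₀ ℕ, ltT lt a b → ltT lt (a + c) (b + c) := by
  rintro a b c (h | ⟨e, h⟩)
  · exact Or.inl (by rw [xpart_add, xpart_add]; exact hlt.2.2.2.2 _ _ _ h)
  · refine Or.inr ⟨by rw [xpart_add, xpart_add, e], ?_⟩
    simpa using Nat.add_lt_add_right h (c none)

lemma exists_max {α : Type*} {r : α → α → Prop} (htot : ∀ a b, a ≠ b → r a b ∨ r b a)
    (htr : ∀ a b c, r a b → r b c → r a c) (s : Finset α) (hs : s.Nonempty) :
    ∃ m ∈ s, ∀ x ∈ s, x ≠ m → r x m := by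
  classical
  induction s using Finset.induction_on with
  | empty => exact absurd hs (by simp)
  | @insert a s ha ih =>
      rcases s.eq_empty_or_nonempty with rfl | hs'
      · exact ⟨a, Finset.mem_insert_self _ _, by simp⟩
      · obtain ⟨m, hm, hmax⟩ := ih hs'
        have ham : a ≠ m := fun h => ha (h ▸ hm)
        rcases htot a m ham with h | h
        · refine ⟨m, Finset.mem_insert_of_mem hm, ?_⟩
          intro x hx hxm
          rcases Finset.mem_insert.mp hx with rfl | hx'
          · exact h
          · exact hmax x hx' hxm
        · refine ⟨a, Finset.mem_insert_self _ _, ?_⟩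
          intro x hx hxa
          rcases Finset.mem_insert.mp hx with rfl | hx'
          · exact absurd rfl hxa
          · by_cases hxm : x = m
            · exact hxm ▸ h
            · exact htr _ _ _ (hmax x hx' hxm) h

lemma exists_isLM {K σ : Type*} [CommSemiring K] {r : (σ →₀ ℕ) → (σ →₀ ℕ) → Prop}
    (htot : ∀ a b, a ≠ b → r a b ∨ r b a) (htr : ∀ a b c, r a b → r b c → r a c)
    (f : MvPolynomial σ K) (hf : f ≠ 0) : ∃ m, IsLM r f m := by
  obtain ⟨m, hm, hmax⟩ := exists_max htot htr f.support
    (Finset.nonempty_iff_ne_empty.mpr (fun h => hf (MvPolynomial.support_eq_empty.mp h)))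
  exact ⟨m, hm, hmax⟩

lemma isLM_unique {K σ : Type*} [CommSemiring K] {r : (σ →₀ ℕ) → (σ →₀ ℕ) → Prop}
    (hasym : ∀ a b, r a b → ¬ r b a) {f : MvPolynomial σ K} {m₁ m₂ : σ →₀ ℕ}
    (h1 : IsLM r f m₁) (h2 : IsLM r f m₂) : m₁ = m₂ := by
  by_contra h
  exact hasym _ _ (h2.2 m₁ h1.1 h) (h1.2 m₂ h2.1 (Ne.symm h))

lemma isLM_mdeg {K : Type*} [CommSemiring K] (hlt : GoodOrder lt)
    {f : MvPolynomial (Fin n) K} {m : Fin n →₀ ℕ}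
    (hm : IsLM lt f m) : mdeg m = f.totalDegree := by
  obtain ⟨d, hd, hsup⟩ := Finset.exists_mem_eq_sup f.support ⟨m, hm.1⟩
    (fun s => s.sum fun _ e => e)
  have hmle : mdeg m ≤ f.totalDegree := MvPolynomial.le_totalDegree hm.1
  have htd : f.totalDegree = mdeg d := hsup
  by_contra hne
  have hlt' : mdeg m < mdeg d := htd ▸ lt_of_le_of_ne hmle hne
  have hdm : d ≠ m := fun h => by rw [h] at hlt'; exact lt_irrefl _ hlt'
  exact hlt.2.1 _ _ (hm.2 d hd hdm) (hlt.2.2.2.1 _ _ hlt')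

end Order
section Deh

open MvPolynomial

variable {K : Type*} [Field K] {n : ℕ}

lemma deh_monomial (M : Option (Fin n) →₀ ℕ) (c : K) :
    deh (monomial M c) = monomial (xpart M) c := by
  unfold deh
  rw [aeval_monomial]
  conv_lhs => rw [decompM M]
  rw [Finsupp.prod_add_index' (fun _ => pow_zero _) (fun _ _ _ => pow_add _ _ _),
    Finsupp.prod_mapDomain_index_inj (Option.some_injective (Fin n)),
    Finsupp.prod_single_index
      (h := fun (o : Option (Fin n)) (k : ℕ) => (Option.elim o 1 X : MvPolynomial (Fin n) K) ^ k)
      (pow_zero _)]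
  simp [monomial_eq, algebraMap_eq]

lemma deh_eq_sum (F : MvPolynomial (Option (Fin n)) K) :
    deh F = ∑ M ∈ F.support, monomial (xpart M) (coeff M F) := by
  conv_lhs => rw [F.as_sum]
  unfold deh
  rw [map_sum]
  exact Finset.sum_congr rfl fun M _ => deh_monomial M (coeff M F)

lemma deh_hmz (f : MvPolynomial (Fin n) K) : deh (hmz f) = f := by
  unfold hmz
  have : deh (∑ d ∈ f.support, (monomial (Finsupp.mapDomain some d +
      Finsupp.single (none : Option (Fin n)) (f.totalDegree - d.sum fun _ e => e)) (coeff d f)))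
      = ∑ d ∈ f.support, deh (monomial (Finsupp.mapDomain some d +
      Finsupp.single (none : Option (Fin n)) (f.totalDegree - d.sum fun _ e => e)) (coeff d f)) := by
    unfold deh; rw [map_sum]
  rw [this]
  conv_rhs => rw [f.as_sum]
  refine Finset.sum_congr rfl fun d _ => ?_
  rw [deh_monomial, xpart_decomp]

lemma coeff_hmz_zero (f : MvPolynomial (Fin n) K) (M : Option (Fin n) →₀ ℕ)
    (hM : M ∉ f.support.image fun d => Finsupp.mapDomain some d +
      Finsupp.single (none : Option (Fin n)) (f.totalDegree - mdeg d)) :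
    coeff M (hmz f) = 0 := by
  unfold mdeg at hM
  unfold hmz
  rw [coeff_sum]
  refine Finset.sum_eq_zero fun d hd => ?_
  rw [coeff_monomial, if_neg]
  intro h
  exact hM (Finset.mem_image.mpr ⟨d, hd, h⟩)

lemma coeff_hmz (f : MvPolynomial (Fin n) K) (d : Fin n →₀ ℕ) (hd : d ∈ f.support) :
    coeff (Finsupp.mapDomain some d +
      Finsupp.single (none : Option (Fin n)) (f.totalDegree - mdeg d)) (hmz f) = coeff d f := by
  classical
  unfold mdeg
  unfold hmz
  rw [coeff_sum]
  rw [Finset.sum_eq_single d]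
  · rw [coeff_monomial, if_pos rfl]
  · intro d' hd' hne
    rw [coeff_monomial, if_neg]
    intro h
    apply hne
    have := congrArg xpart h
    rwa [xpart_decomp, xpart_decomp] at this
  · intro h; exact absurd hd h

end Deh
section Hmz

open MvPolynomial

variable {K : Type*} [Field K] {n : ℕ} {lt : (Fin n →₀ ℕ) → (Fin n →₀ ℕ) → Prop}

lemma mem_image_of_mem_support_hmz (f : MvPolynomial (Fin n) K) (M : Option (Fin n) →₀ ℕ)
    (hM : M ∈ (hmz f).support) :
    ∃ d ∈ f.support, M = Finsupp.mapDomain some d +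
      Finsupp.single (none : Option (Fin n)) (f.totalDegree - mdeg d) := by
  by_contra h
  push_neg at h
  refine (MvPolynomial.mem_support_iff.mp hM) (coeff_hmz_zero f M ?_)
  intro hmem
  obtain ⟨d, hd, heq⟩ := Finset.mem_image.mp hmem
  exact h d hd heq.symm

lemma hmz_mem_homog (f : MvPolynomial (Fin n) K) :
    hmz f ∈ homogeneousSubmodule (Option (Fin n)) K f.totalDegree := by
  unfold hmz
  refine Submodule.sum_mem _ fun d hd => ?_
  rw [mem_homogeneousSubmodule]
  refine isHomogeneous_monomial _ ?_
  show mdeg _ = f.totalDegree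
  rw [mdeg_add, mdeg_mapDomain, mdeg_single]
  have h1 : mdeg d ≤ f.totalDegree := MvPolynomial.le_totalDegree hd
  have h2 : (d.sum fun _ e => e) = mdeg d := rfl
  rw [h2]
  omega

lemma isLM_hmz (hlt : GoodOrder lt) {f : MvPolynomial (Fin n) K} {m : Fin n →₀ ℕ}
    (hm : IsLM lt f m) : IsLM (ltT lt) (hmz f) (Finsupp.mapDomain some m) := by
  have hdeg : mdeg m = f.totalDegree := isLM_mdeg hlt hm
  have hemz : Finsupp.mapDomain some m +
      Finsupp.single (none : Option (Fin n)) (f.totalDegree - mdeg m)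
      = Finsupp.mapDomain some m := by
    rw [hdeg, Nat.sub_self, Finsupp.single_zero, add_zero]
  constructor
  · rw [MvPolynomial.mem_support_iff, ← hemz, coeff_hmz f m hm.1]
    exact MvPolynomial.mem_support_iff.mp hm.1
  · intro M' hM' hne
    obtain ⟨d, hd, rfl⟩ := mem_image_of_mem_support_hmz f M' hM'
    have hdm : d ≠ m := by
      intro h
      subst h
      exact hne hemz
    left
    rw [xpart_decomp]
    have : xpart (Finsupp.mapDomain some m) = m := by
      have := xpart_decomp m 0
      rwa [Finsupp.single_zero, add_zero] at this
    rw [this]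
    exact hm.2 d hd hdm

lemma hmz_ne_zero {f : MvPolynomial (Fin n) K} (hf : f ≠ 0) : hmz f ≠ 0 := by
  intro h
  apply hf
  have h2 := deh_hmz f
  rw [h] at h2
  rw [← h2]
  unfold deh
  exact map_zero (MvPolynomial.aeval _)

lemma deh_mem {I : Ideal (MvPolynomial (Fin n) K)} {F : MvPolynomial (Option (Fin n)) K}
    (hF : F ∈ Ideal.span (HSet I)) : deh F ∈ I := by
  have hle : Ideal.span (HSet I) ≤ Ideal.comap (dehHom (K := K) (n := n)) I := by
    rw [Ideal.span_le]
    rintro F ⟨f, hfI, _, rfl⟩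
    show dehHom (hmz f) ∈ I
    show deh (hmz f) ∈ I
    rw [deh_hmz]
    exact hfI
  exact hle hF

end Hmz
section Graded

open MvPolynomial

variable {K : Type*} [Field K] {n : ℕ}

lemma hc_mul (c h : MvPolynomial (Option (Fin n)) K) (d : ℕ)
    (hh : h ∈ homogeneousSubmodule (Option (Fin n)) K d) (p : ℕ) :
    ∃ c', homogeneousComponent p (c * h) = c' * h := by
  classical
  refine ⟨∑ i ∈ Finset.range (c.totalDegree + 1),
    if p = i + d then homogeneousComponent i c else 0, ?_⟩
  conv_lhs => rw [← sum_homogeneousComponent c]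
  rw [Finset.sum_mul, map_sum, Finset.sum_mul]
  refine Finset.sum_congr rfl fun i _ => ?_
  have hmem : homogeneousComponent i c * h ∈
      homogeneousSubmodule (Option (Fin n)) K (i + d) := by
    rw [mem_homogeneousSubmodule]
    exact (homogeneousComponent_isHomogeneous i c).mul (mem_homogeneousSubmodule _ _ |>.mp hh)
  rw [homogeneousComponent_of_mem hmem, ite_mul, zero_mul]

lemma gradedJ {I : Ideal (MvPolynomial (Fin n) K)} {F : MvPolynomial (Option (Fin n)) K}
    (hF : F ∈ Ideal.span (HSet I)) (p : ℕ) :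
    homogeneousComponent p F ∈ Ideal.span (HSet I) := by
  obtain ⟨c, hsupp, rfl⟩ := Submodule.mem_span_set.mp hF
  rw [map_finsuppSum]
  refine Submodule.sum_mem _ fun s hs => ?_
  have hsH : s ∈ HSet I := hsupp hs
  obtain ⟨f, _, _, rfl⟩ := hsH
  show homogeneousComponent p (c (hmz f) * hmz f) ∈ Ideal.span (HSet I)
  obtain ⟨c', hc'⟩ := hc_mul (c (hmz f)) (hmz f) f.totalDegree (hmz_mem_homog f) p
  rw [hc']
  exact Ideal.mul_mem_left _ _ (Ideal.subset_span (hsupp hs))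

end Graded
section Key

open MvPolynomial

variable {K : Type*} [Field K] {n : ℕ} {lt : (Fin n →₀ ℕ) → (Fin n →₀ ℕ) → Prop}

lemma key_lemma (hlt : GoodOrder lt) {I : Ideal (MvPolynomial (Fin n) K)}
    {G : Set (MvPolynomial (Fin n) K)} (hGB : IsGB lt G (I : Set (MvPolynomial (Fin n) K)))
    {F : MvPolynomial (Option (Fin n)) K} (hFJ : F ∈ Ideal.span (HSet I)) (hF0 : F ≠ 0)
    {M : Option (Fin n) →₀ ℕ} (hM : IsLM (ltT lt) F M) :
    ∃ g ∈ G, g ∈ I ∧ g ≠ 0 ∧ ∃ mg, IsLM lt g mg ∧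
      monDvd (Finsupp.mapDomain some mg) M := by
  classical
  set P := homogeneousComponent (mdeg M) F with hP
  have hcoeffP : ∀ N, coeff N P = if mdeg N = mdeg M then coeff N F else 0 := by
    intro N
    rw [hP, coeff_homogeneousComponent, degree_eq_mdeg]
  have hMP : coeff M P = coeff M F := by rw [hcoeffP, if_pos rfl]
  have hMs : M ∈ P.support := by
    rw [mem_support_iff, hMP]
    exact mem_support_iff.mp hM.1
  have hP0 : P ≠ 0 := fun h => by simp [h] at hMs
  have hPJ : P ∈ Ideal.span (HSet I) := gradedJ hFJ _
  have hsuppPF : P.support ⊆ F.support := by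
    intro N hN
    rw [mem_support_iff] at hN ⊢
    intro h
    apply hN
    rw [hcoeffP, h, ite_self]
  have hLMP : IsLM (ltT lt) P M := ⟨hMs, fun N hN hne => hM.2 N (hsuppPF hN) hne⟩
  have hdegP : ∀ N ∈ P.support, mdeg N = mdeg M := by
    intro N hN
    by_contra h
    apply mem_support_iff.mp hN
    rw [hcoeffP, if_neg h]
  have hinj : ∀ N ∈ P.support, ∀ N' ∈ P.support, xpart N = xpart N' → N = N' := by
    intro N hN N' hN' hx
    have e1 : mdeg N = mdeg M := hdegP N hN
    have e2 : mdeg N' = mdeg M := hdegP N' hN'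
    have h1 := mdeg_M N
    have h2 := mdeg_M N'
    rw [hx] at h1
    have hnn : N none = N' none := by omega
    rw [decompM N, decompM N', hx, hnn]
  set f := deh P with hf
  have hfI : f ∈ I := deh_mem hPJ
  have hcoefff : coeff (xpart M) f = coeff M P := by
    rw [hf, deh_eq_sum, coeff_sum]
    rw [Finset.sum_eq_single M]
    · rw [coeff_monomial, if_pos rfl]
    · intro N hN hne
      rw [coeff_monomial, if_neg]
      intro h
      exact hne (hinj N hN M hMs h)
    · intro h; exact absurd hMs h
  have hfs : xpart M ∈ f.support := by
    rw [mem_support_iff, hcoefff]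
    exact mem_support_iff.mp hMs
  have hf0 : f ≠ 0 := fun h => by simp [h] at hfs
  have hLMf : IsLM lt f (xpart M) := by
    refine ⟨hfs, ?_⟩
    intro m' hm' hne
    have hex : ∃ N ∈ P.support, m' = xpart N := by
      by_contra hcon
      push_neg at hcon
      apply mem_support_iff.mp hm'
      rw [hf, deh_eq_sum, coeff_sum]
      exact Finset.sum_eq_zero fun N hN => by
        rw [coeff_monomial, if_neg (fun h => hcon N hN h.symm)]
    obtain ⟨N, hN, rfl⟩ := hex
    have hNM : N ≠ M := fun h => hne (by rw [h])
    rcases hLMP.2 N hN hNM with h | ⟨he, _⟩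
    · exact h
    · exact absurd he hne
  obtain ⟨g, hgG, mf, mg, hmf, hmg, hdvd⟩ := hGB.2 f hfI hf0
  have hmfeq : mf = xpart M := isLM_unique hlt.2.1 hmf hLMf
  obtain ⟨cc, hcc⟩ := hdvd
  have hx : xpart M = mg + cc := by rw [← hmfeq]; exact hcc
  refine ⟨g, hgG, hGB.1 hgG, ?_, mg, hmg, ?_⟩
  · intro h
    have := hmg.1
    rw [h] at this
    simp at this
  · refine ⟨Finsupp.mapDomain some cc + Finsupp.single none (M none), ?_⟩
    conv_lhs => rw [decompM M]
    rw [hx, Finsupp.mapDomain_add, add_assoc]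

end Key
section Part1

open MvPolynomial

variable {K : Type*} [Field K] {n : ℕ} {lt : (Fin n →₀ ℕ) → (Fin n →₀ ℕ) → Prop}

lemma not_normal (hlt : GoodOrder lt) {I : Ideal (MvPolynomial (Fin n) K)}
    {G : Set (MvPolynomial (Fin n) K)} (hGB : IsGB lt G (I : Set (MvPolynomial (Fin n) K)))
    {F : MvPolynomial (Option (Fin n)) K} (hFJ : F ∈ Ideal.span (HSet I)) (hF0 : F ≠ 0)
    {M : Option (Fin n) →₀ ℕ} (hM : IsLM (ltT lt) F M) :
    M ∉ NormalMon (ltT lt) ((Ideal.span (HSet I)) : Set (MvPolynomial (Option (Fin n)) K)) := by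
  obtain ⟨g, hgG, hgI, hg0, mg, hmg, hdvd⟩ := key_lemma hlt hGB hFJ hF0 hM
  intro hnorm
  exact hnorm (hmz g) (Ideal.subset_span ⟨g, hgI, hg0, rfl⟩) (hmz_ne_zero hg0)
    (Finsupp.mapDomain some mg) (isLM_hmz hlt hmg) hdvd

lemma exists_nonnormal (hlt : GoodOrder lt) {I : Ideal (MvPolynomial (Fin n) K)}
    {G : Set (MvPolynomial (Fin n) K)} (hGB : IsGB lt G (I : Set (MvPolynomial (Fin n) K)))
    {F : MvPolynomial (Option (Fin n)) K} (hFJ : F ∈ Ideal.span (HSet I)) (hF0 : F ≠ 0) :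
    ∃ M ∈ F.support,
      M ∉ NormalMon (ltT lt) ((Ideal.span (HSet I)) : Set (MvPolynomial (Option (Fin n)) K)) := by
  obtain ⟨M, hM⟩ := exists_isLM (ltT_total hlt) (ltT_trans hlt) F hF0
  exact ⟨M, hM.1, not_normal hlt hGB hFJ hF0 hM⟩

lemma part1 (hlt : GoodOrder lt) {I : Ideal (MvPolynomial (Fin n) K)}
    {G : Set (MvPolynomial (Fin n) K)} (hGB : IsGB lt G (I : Set (MvPolynomial (Fin n) K))) :
    NormalMon (ltT lt) ((Ideal.span (HSet I)) : Set (MvPolynomial (Option (Fin n)) K)) =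
      {M | ∃ w ∈ NormalMon lt (I : Set (MvPolynomial (Fin n) K)), ∃ r : ℕ,
        M = Finsupp.mapDomain some w + Finsupp.single (none : Option (Fin n)) r} := by
  ext M
  constructor
  · intro hM
    refine ⟨xpart M, ?_, M none, decompM M⟩
    intro f hfI hf0 m hm hdvd
    obtain ⟨c, hc⟩ := hdvd
    refine hM (hmz f) (Ideal.subset_span ⟨f, hfI, hf0, rfl⟩) (hmz_ne_zero hf0)
      (Finsupp.mapDomain some m) (isLM_hmz hlt hm) ?_
    refine ⟨Finsupp.mapDomain some c + Finsupp.single none (M none), ?_⟩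
    conv_lhs => rw [decompM M]
    rw [hc, Finsupp.mapDomain_add, add_assoc]
  · rintro ⟨w, hw, r, rfl⟩
    intro F hFJ hF0 M' hM' hdvd
    obtain ⟨g, hgG, hgI, hg0, mg, hmg, c1, hc1⟩ := key_lemma hlt hGB hFJ hF0 hM'
    obtain ⟨c2, hc2⟩ := hdvd
    refine hw g hgI hg0 mg hmg ⟨xpart (c1 + c2), ?_⟩
    have hEq : Finsupp.mapDomain some w + Finsupp.single (none : Option (Fin n)) r
        = Finsupp.mapDomain some mg + (c1 + c2) := by rw [hc2, hc1, add_assoc]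
    ext i
    have h2 := congrArg (fun v : Option (Fin n) →₀ ℕ => v (some i)) hEq
    simp only [Finsupp.add_apply,
      Finsupp.mapDomain_apply (Option.some_injective (Fin n)),
      Finsupp.single_eq_of_ne' (show (none : Option (Fin n)) ≠ some i by simp),
      add_zero] at h2
    rw [Finsupp.add_apply, xpart_apply]
    exact h2

end Part1
section WF

open MvPolynomial

variable {n : ℕ} {lt : (Fin n →₀ ℕ) → (Fin n →₀ ℕ) → Prop}

lemma apply_le_mdeg (m : Fin n →₀ ℕ) (i : Fin n) : m i ≤ mdeg m := by
  by_cases h : i ∈ m.support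
  · exact Finset.single_le_sum (fun _ _ => Nat.zero_le _) h
  · rw [Finsupp.notMem_support_iff.mp h]
    exact Nat.zero_le _

lemma finite_mdeg_eq (d : ℕ) : {m : Fin n →₀ ℕ | mdeg m = d}.Finite := by
  have hsub : {m : Fin n →₀ ℕ | mdeg m = d} ⊆
      Set.Iic (Finsupp.equivFunOnFinite.symm fun _ => d) := by
    intro m hm
    intro i
    have := apply_le_mdeg m i
    simpa using this.trans_eq hm
  exact (Set.finite_Iic _).subset hsub

noncomputable def rnk (lt : (Fin n →₀ ℕ) → (Fin n →₀ ℕ) → Prop) (m : Fin n →₀ ℕ) : ℕ :=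
  {m' : Fin n →₀ ℕ | mdeg m' = mdeg m ∧ lt m' m}.ncard

lemma rnk_lt (hlt : GoodOrder lt) {a b : Fin n →₀ ℕ} (hab : lt a b)
    (hdeg : mdeg a = mdeg b) : rnk lt a < rnk lt b := by
  have hfin : {m' : Fin n →₀ ℕ | mdeg m' = mdeg b ∧ lt m' b}.Finite :=
    (finite_mdeg_eq (mdeg b)).subset fun m hm => hm.1
  refine Set.ncard_lt_ncard ?_ hfin
  constructor
  · intro m hm
    exact ⟨hm.1.trans hdeg, hlt.2.2.1 _ _ _ hm.2 hab⟩
  · intro hsub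
    have haB : a ∈ {m' : Fin n →₀ ℕ | mdeg m' = mdeg b ∧ lt m' b} := ⟨hdeg, hab⟩
    have haA := hsub haB
    exact hlt.2.1 _ _ haA.2 haA.2

lemma ltT_wf (hlt : GoodOrder lt) : WellFounded (ltT lt (n := n)) := by
  have hq : WellFounded (InvImage (Prod.Lex (· < ·) (Prod.Lex (· < ·) (· < ·)))
      (fun M : Option (Fin n) →₀ ℕ => (mdeg (xpart M), (rnk lt (xpart M), M none)))) :=
    InvImage.wf _ ((Nat.lt_wfRel.wf).prod_lex ((Nat.lt_wfRel.wf).prod_lex Nat.lt_wfRel.wf))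
  refine Subrelation.wf ?_ hq
  rintro M₁ M₂ (h | ⟨he, hn⟩)
  · have hle : mdeg (xpart M₁) ≤ mdeg (xpart M₂) := by
      by_contra hcon
      push_neg at hcon
      exact hlt.2.1 _ _ h (hlt.2.2.2.1 _ _ hcon)
    rcases lt_or_eq_of_le hle with hlt' | heq
    · exact Prod.Lex.left _ _ hlt'
    · show Prod.Lex _ _ (mdeg (xpart M₁), _) (mdeg (xpart M₂), _)
      rw [← heq]
      exact Prod.Lex.right _ (Prod.Lex.left _ _ (rnk_lt hlt h heq))
  · show Prod.Lex _ _ (mdeg (xpart M₁), (rnk lt (xpart M₁), M₁ none)) _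
    rw [he]
    exact Prod.Lex.right _ (Prod.Lex.right _ hn)

end WF
section Quot

open MvPolynomial

variable {K : Type*} [Field K] {n : ℕ} {lt : (Fin n →₀ ℕ) → (Fin n →₀ ℕ) → Prop}

lemma mk_smul (J : Ideal (MvPolynomial (Option (Fin n)) K)) (c : K)
    (F : MvPolynomial (Option (Fin n)) K) :
    Ideal.Quotient.mk J (c • F) = c • Ideal.Quotient.mk J F := by
  rw [← Ideal.Quotient.mkₐ_eq_mk K J]
  exact map_smul (Ideal.Quotient.mkₐ K J) c F

lemma monomial_smul_one (N : Option (Fin n) →₀ ℕ) (c : K) :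
    monomial N c = c • monomial N (1 : K) := by
  rw [smul_monomial, smul_eq_mul, mul_one]

lemma span_mono (hlt : GoodOrder lt) {I : Ideal (MvPolynomial (Fin n) K)}
    (M : Option (Fin n) →₀ ℕ) :
    Ideal.Quotient.mk (Ideal.span (HSet I)) (monomial M (1 : K)) ∈
      Submodule.span K (Set.range
        (fun M : NormalMon (ltT lt)
            ((Ideal.span (HSet I)) : Set (MvPolynomial (Option (Fin n)) K)) =>
          Ideal.Quotient.mk (Ideal.span (HSet I)) (MvPolynomial.monomial M.1 (1 : K)))) := by
  classical
  induction M using (ltT_wf hlt).induction with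
  | _ M ih =>
  by_cases hM : M ∈ NormalMon (ltT lt)
      ((Ideal.span (HSet I)) : Set (MvPolynomial (Option (Fin n)) K))
  · exact Submodule.subset_span ⟨⟨M, hM⟩, rfl⟩
  · simp only [NormalMon, Set.mem_setOf_eq] at hM
    push_neg at hM
    obtain ⟨F, hFJ, hF0, m', hm', c, hc⟩ := hM
    set a := coeff m' F with ha
    have ha0 : a ≠ 0 := mem_support_iff.mp hm'.1
    set Fc := monomial c (a⁻¹) * F with hFc
    have hFc_zero : ∀ N, (N ∉ F.support.image fun d => c + d) → coeff N Fc = 0 := by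
      intro N hN
      rw [hFc]
      conv_lhs => rw [F.as_sum, Finset.mul_sum]
      rw [coeff_sum]
      refine Finset.sum_eq_zero fun d hd => ?_
      rw [monomial_mul, coeff_monomial, if_neg]
      intro h
      exact hN (Finset.mem_image.mpr ⟨d, hd, h⟩)
    have hFcM : coeff M Fc = 1 := by
      rw [hFc, hc, add_comm m' c, coeff_monomial_mul, ← ha, inv_mul_cancel₀ ha0]
    set H := monomial M (1 : K) - Fc with hH
    have hmkeq : Ideal.Quotient.mk (Ideal.span (HSet I)) (monomial M (1 : K)) =
        Ideal.Quotient.mk (Ideal.span (HSet I)) H := by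
      rw [Ideal.Quotient.eq]
      have : monomial M (1 : K) - H = Fc := by rw [hH]; ring
      rw [this, hFc]
      exact Ideal.mul_mem_left _ _ hFJ
    have hsupp : ∀ N ∈ H.support, ltT lt N M := by
      intro N hN
      have hcoeffN : coeff N H ≠ 0 := mem_support_iff.mp hN
      have hNM : N ≠ M := by
        rintro rfl
        apply hcoeffN
        rw [hH, coeff_sub, coeff_monomial, if_pos rfl, hFcM, sub_self]
      have hFcN : coeff N Fc ≠ 0 := by
        intro h
        apply hcoeffN
        rw [hH, coeff_sub, coeff_monomial, if_neg (fun h' => hNM h'.symm), h, sub_zero]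
      have hNim : N ∈ F.support.image fun d => c + d := by
        by_contra hcon
        exact hFcN (hFc_zero N hcon)
      obtain ⟨d, hd, rfl⟩ := Finset.mem_image.mp hNim
      have hdm : d ≠ m' := by
        intro h
        exact hNM (by rw [h, hc, add_comm])
      have := ltT_add hlt d m' c (hm'.2 d hd hdm)
      rw [hc, add_comm c d]
      exact this
    rw [hmkeq, H.as_sum, map_sum]
    refine Submodule.sum_mem _ fun N hN => ?_
    rw [monomial_smul_one, mk_smul]
    exact Submodule.smul_mem _ _ (ih N (hsupp N hN))

end Quot
section Final

open MvPolynomial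

variable {K : Type*} [Field K] {n : ℕ} {lt : (Fin n →₀ ℕ) → (Fin n →₀ ℕ) → Prop}

lemma part3 (hlt : GoodOrder lt) {I : Ideal (MvPolynomial (Fin n) K)} :
    Submodule.span K (Set.range
      (fun M : NormalMon (ltT lt)
          ((Ideal.span (HSet I)) : Set (MvPolynomial (Option (Fin n)) K)) =>
        Ideal.Quotient.mk (Ideal.span (HSet I)) (MvPolynomial.monomial M.1 (1 : K)))) = ⊤ := by
  rw [eq_top_iff]
  rintro x -
  obtain ⟨F, rfl⟩ := Ideal.Quotient.mk_surjective x
  rw [F.as_sum, map_sum]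
  refine Submodule.sum_mem _ fun N _ => ?_
  rw [monomial_smul_one, mk_smul]
  exact Submodule.smul_mem _ _ (span_mono hlt N)

lemma part2 (hlt : GoodOrder lt) {I : Ideal (MvPolynomial (Fin n) K)}
    {G : Set (MvPolynomial (Fin n) K)} (hGB : IsGB lt G (I : Set (MvPolynomial (Fin n) K))) :
    LinearIndependent K
      (fun M : NormalMon (ltT lt)
          ((Ideal.span (HSet I)) : Set (MvPolynomial (Option (Fin n)) K)) =>
        Ideal.Quotient.mk (Ideal.span (HSet I)) (MvPolynomial.monomial M.1 (1 : K))) := by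
  classical
  rw [linearIndependent_iff']
  intro s g hsum i hi
  set F := ∑ j ∈ s, monomial (j.1 : Option (Fin n) →₀ ℕ) (g j) with hF
  have hmk : Ideal.Quotient.mk (Ideal.span (HSet I)) F = 0 := by
    rw [hF, map_sum, ← hsum]
    refine Finset.sum_congr rfl fun j _ => ?_
    rw [monomial_smul_one, mk_smul]
  have hFJ : F ∈ Ideal.span (HSet I) := Ideal.Quotient.eq_zero_iff_mem.mp hmk
  have hcoeff : ∀ j ∈ s, coeff (j.1 : Option (Fin n) →₀ ℕ) F = g j := by
    intro j hj
    rw [hF, coeff_sum, Finset.sum_eq_single j]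
    · rw [coeff_monomial, if_pos rfl]
    · intro j' _ hne
      rw [coeff_monomial, if_neg (fun h => hne (Subtype.ext h))]
    · intro h; exact absurd hj h
  by_contra hgi
  have hF0 : F ≠ 0 := fun h => hgi (by rw [← hcoeff i hi, h, coeff_zero])
  obtain ⟨N, hNs, hNnorm⟩ := exists_nonnormal hlt hGB hFJ hF0
  have hex : ∃ j ∈ s, N = (j.1 : Option (Fin n) →₀ ℕ) := by
    by_contra hcon
    push_neg at hcon
    apply mem_support_iff.mp hNs
    rw [hF, coeff_sum]
    exact Finset.sum_eq_zero fun j hj => by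
      rw [coeff_monomial, if_neg (fun h => hcon j hj h.symm)]
  obtain ⟨j, _, rfl⟩ := hex
  exact hNnorm j.2

end Final

theorem stmt9 {K : Type*} [Field K] {n : ℕ}
    (lt : (Fin n →₀ ℕ) → (Fin n →₀ ℕ) → Prop) (hlt : GoodOrder lt)
    (I : Ideal (MvPolynomial (Fin n) K)) (G : Set (MvPolynomial (Fin n) K))
    (hGB : IsGB lt G (I : Set (MvPolynomial (Fin n) K))) :
    NormalMon (ltT lt)
        ((Ideal.span (HSet I)) : Set (MvPolynomial (Option (Fin n)) K)) =
      {M | ∃ w ∈ NormalMon lt (I : Set (MvPolynomial (Fin n) K)), ∃ r : ℕ,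
        M = Finsupp.mapDomain some w + Finsupp.single (none : Option (Fin n)) r} ∧
    LinearIndependent K
      (fun M : NormalMon (ltT lt)
          ((Ideal.span (HSet I)) : Set (MvPolynomial (Option (Fin n)) K)) =>
        Ideal.Quotient.mk (Ideal.span (HSet I)) (MvPolynomial.monomial M.1 (1 : K))) ∧
    Submodule.span K (Set.range
      (fun M : NormalMon (ltT lt)
          ((Ideal.span (HSet I)) : Set (MvPolynomial (Option (Fin n)) K)) =>
        Ideal.Quotient.mk (Ideal.span (HSet I)) (MvPolynomial.monomial M.1 (1 : K)))) = ⊤ :=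
  ⟨part1 hlt hGB, part2 hlt hGB, part3 hlt⟩
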